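/- arXiv:math/0001027 — 5 statements merged into one kernel-verified Lean document; each statement's English description precedes it below -/
import Mathlib

section
/- Let X be an n×n complex matrix with X² = 0 and rank X = k ≥ 1. Then there exist a unitary n×n matrix U and positive real numbers a_1, …, a_k such that M = U*XU has entries M_{i, k+i} = a_i for 1 ≤ i ≤ k and all other entries zero (i.e. M is the block matrix [[0, A],[0,0]] with A = diag(a_1, …, a_k)). Moreover a_1², …, a_k² are exactly the nonzero eigenvalues of X*X, counted with multiplicity. -/
open Matrix Polynomial BigOperators

lemma charpoly_diag {n : ℕ} (d : Fin n → ℂ) :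
    (Matrix.diagonal d).charpoly = ∏ i, (Polynomial.X - C (d i)) := by
  rw [Matrix.charpoly]
  have : charmatrix (Matrix.diagonal d) = Matrix.diagonal (fun i => Polynomial.X - C (d i)) := by
    ext i j
    by_cases h : i = j
    · subst h; simp [charmatrix_apply_eq]
    · simp [charmatrix_apply_ne _ _ _ h, Matrix.diagonal_apply_ne _ h]
  rw [this, Matrix.det_diagonal]

lemma charpoly_conj_unitary {n : ℕ} (A U : Matrix (Fin n) (Fin n) ℂ) (hU : Uᴴ * U = 1) :
    (Uᴴ * A * U).charpoly = A.charpoly := by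
  have hU' : U * Uᴴ = 1 := mul_eq_one_comm.mp hU
  have h1 : (Uᴴ.map C) * (U.map C) = 1 := by
    rw [← Matrix.map_mul, hU, Matrix.map_one _ (map_zero C) (map_one C)]
  have hsc : (Matrix.diagonal fun _ : Fin n => (Polynomial.X : ℂ[X]))
      = (Polynomial.X : ℂ[X]) • (1 : Matrix (Fin n) (Fin n) ℂ[X]) := by
    rw [Matrix.smul_one_eq_diagonal]
  have hcm : ∀ (M : Matrix (Fin n) (Fin n) ℂ), charmatrix M
      = (Matrix.diagonal fun _ : Fin n => (Polynomial.X : ℂ[X])) - M.map C := by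
    intro M; ext i j; rw [charmatrix_apply]; simp [Matrix.sub_apply]
  have key : charmatrix (Uᴴ * A * U) = (Uᴴ.map C) * charmatrix A * (U.map C) := by
    rw [hcm, hcm, Matrix.mul_sub, Matrix.sub_mul, hsc]
    rw [mul_smul_comm, smul_mul_assoc, mul_one, h1, ← Matrix.map_mul, ← Matrix.map_mul]
  rw [Matrix.charpoly, key, Matrix.det_mul, Matrix.det_mul, Matrix.charpoly]
  rw [mul_comm (Uᴴ.map C).det _, mul_assoc, ← Matrix.det_mul, h1, Matrix.det_one, mul_one]

lemma EuclideanSpace.inner_piLp_equiv_symm {n : ℕ} (x y : Fin n → ℂ) :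
    inner ℂ ((WithLp.equiv 2 (Fin n → ℂ)).symm x) ((WithLp.equiv 2 (Fin n → ℂ)).symm y)
      = star x ⬝ᵥ y := by
  rw [dotProduct_comm]; rfl

open scoped ComplexOrder in
lemma card_eigs' {n k : ℕ} (X : Matrix (Fin n) (Fin n) ℂ) (hrank : X.rank = k) :
    Fintype.card {j // (Matrix.isHermitian_conjTranspose_mul_self X).eigenvalues j ≠ 0} = k := by
  have h := (Matrix.isHermitian_conjTranspose_mul_self X).rank_eq_card_non_zero_eigs
  rw [Matrix.rank_conjTranspose_mul_self, hrank] at h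
  exact h.symm

open scoped ComplexOrder in
lemma eig_nonneg' {n : ℕ} (X : Matrix (Fin n) (Fin n) ℂ) (j : Fin n) :
    0 ≤ (Matrix.isHermitian_conjTranspose_mul_self X).eigenvalues j :=
  (Matrix.posSemidef_conjTranspose_mul_self X).eigenvalues_nonneg j

open scoped ComplexOrder in
lemma dot_star_self_zero' {n : ℕ} (w : Fin n → ℂ) (h : dotProduct (star w) w = 0) :
    w = 0 :=
  dotProduct_star_self_eq_zero.mp h

/-- Remark 3.2: any `X` with `X² = 0` and `rank X = k ≥ 1` is unitarily conjugate to a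
block matrix `[[0, A],[0,0]]` with `A = diag(a₁,…,a_k)`, `aᵢ > 0`; moreover the
`aᵢ²` are exactly the nonzero eigenvalues of `X*X`, with multiplicity. -/
theorem canonical_form_square_zero (n k : ℕ) (hk : 1 ≤ k)
    (X : Matrix (Fin n) (Fin n) ℂ) (hX2 : X * X = 0) (hrank : X.rank = k) :
    ∃ (U : Matrix (Fin n) (Fin n) ℂ) (a : Fin k → ℝ),
      Uᴴ * U = 1 ∧ (∀ i, 0 < a i) ∧
      (∀ p q : Fin n, (Uᴴ * X * U) p q =
        ∑ i : Fin k, if (p : ℕ) = (i : ℕ) ∧ (q : ℕ) = k + (i : ℕ) then (a i : ℂ) else 0) ∧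
      (Xᴴ * X).charpoly =
        Polynomial.X ^ (n - k) * ∏ i : Fin k, (Polynomial.X - C (((a i) ^ 2 : ℝ) : ℂ)) := by
  classical
  -- dimension bound
  have h2k : 2 * k ≤ n := by
    have hker : LinearMap.range X.mulVecLin ≤ LinearMap.ker X.mulVecLin := by
      rintro z ⟨y, rfl⟩
      simp only [LinearMap.mem_ker, Matrix.mulVecLin_apply, Matrix.mulVec_mulVec, hX2,
        Matrix.zero_mulVec]
    have h1 : Module.finrank ℂ (LinearMap.range X.mulVecLin) = k := hrank
    have h2 := LinearMap.finrank_range_add_finrank_ker X.mulVecLin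
    have h3 : Module.finrank ℂ (Fin n → ℂ) = n := by simp
    have h4 := Submodule.finrank_mono hker
    omega
  -- eigen data
  have hH : (Xᴴ * X).IsHermitian := Matrix.isHermitian_conjTranspose_mul_self X
  set μ : Fin n → ℝ := hH.eigenvalues with hμdef
  have hμ0 : ∀ j, 0 ≤ μ j := fun j => eig_nonneg' X j
  set B := hH.eigenvectorBasis with hBdef
  have hmv : ∀ j, (Xᴴ * X) *ᵥ ⇑(B j) = μ j • ⇑(B j) := hH.mulVec_eigenvectorBasis
  have hcard : Fintype.card {j // μ j ≠ 0} = k := card_eigs' X hrank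
  let e : Fin k ≃ {j // μ j ≠ 0} := (Fintype.equivFinOfCardEq hcard).symm
  let lam : Fin k → ℝ := fun i => μ (e i)
  have hlam : ∀ i, 0 < lam i := fun i => lt_of_le_of_ne (hμ0 _) (Ne.symm (e i).2)
  let a : Fin k → ℝ := fun i => Real.sqrt (lam i)
  have ha : ∀ i, 0 < a i := fun i => Real.sqrt_pos.mpr (hlam i)
  have hasq : ∀ i, (a i) ^ 2 = lam i := fun i => Real.sq_sqrt (hlam i).le
  have haC : ∀ i, (a i : ℂ) ≠ 0 := fun i => by
    exact_mod_cast Complex.ofReal_ne_zero.mpr (ha i).ne'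
  -- the v and u vectors
  let v : Fin k → (Fin n → ℂ) := fun i => ⇑(B ((e i : Fin n)))
  let u : Fin k → (Fin n → ℂ) := fun i => ((a i : ℂ))⁻¹ • (X *ᵥ v i)
  have hXv : ∀ i, X *ᵥ v i = (a i : ℂ) • u i := by
    intro i
    show X *ᵥ v i = (a i : ℂ) • (((a i : ℂ))⁻¹ • (X *ᵥ v i))
    rw [smul_smul, mul_inv_cancel₀ (haC i), one_smul]
  have hAv : ∀ i, (Xᴴ * X) *ᵥ v i = ((lam i : ℂ)) • v i := by
    intro i
    have := hmv (e i)
    rw [this]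
    funext r
    rw [Pi.smul_apply, Pi.smul_apply, Complex.real_smul, smul_eq_mul]
  have hXu : ∀ i, X *ᵥ u i = 0 := by
    intro i
    show X *ᵥ (((a i : ℂ))⁻¹ • (X *ᵥ v i)) = 0
    rw [Matrix.mulVec_smul, Matrix.mulVec_mulVec, hX2, Matrix.zero_mulVec, smul_zero]
  -- orthonormality of eigenvectors
  have hBo : ∀ p q : Fin n, star ⇑(B p) ⬝ᵥ ⇑(B q) = if p = q then (1:ℂ) else 0 := by
    intro p q
    rw [dotProduct_comm]; exact orthonormal_iff_ite.mp B.orthonormal p q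
  have hvv : ∀ i j, star (v i) ⬝ᵥ v j = if i = j then (1:ℂ) else 0 := by
    intro i j
    rw [show (star (v i) ⬝ᵥ v j) = (star ⇑(B (e i : Fin n)) ⬝ᵥ ⇑(B (e j : Fin n))) from rfl,
      hBo]
    congr 1
    simp only [eq_iff_iff]
    constructor
    · intro h; exact e.injective (Subtype.ext h)
    · intro h; rw [h]
  -- ⟨X v i, X v j⟩ = lam j δ
  have hXvXv : ∀ i j, star (X *ᵥ v i) ⬝ᵥ (X *ᵥ v j)
      = (lam j : ℂ) * (if i = j then (1:ℂ) else 0) := by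
    intro i j
    rw [Matrix.star_mulVec, ← Matrix.dotProduct_mulVec, Matrix.mulVec_mulVec, hAv j,
      dotProduct_smul, hvv i j, smul_eq_mul]
  have huu : ∀ i j, star (u i) ⬝ᵥ u j = if i = j then (1:ℂ) else 0 := by
    intro i j
    show star (((a i : ℂ))⁻¹ • (X *ᵥ v i)) ⬝ᵥ (((a j : ℂ))⁻¹ • (X *ᵥ v j)) = _
    rw [star_smul, smul_dotProduct, dotProduct_smul, hXvXv i j]
    by_cases h : i = j
    · subst h
      simp only [if_pos rfl, mul_one]
      rw [star_inv₀, Complex.star_def, Complex.conj_ofReal]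
      rw [smul_eq_mul, smul_eq_mul, ← hasq i]
      push_cast
      have hne := haC i
      field_simp
    · simp [h]
  have huv : ∀ i j, star (u i) ⬝ᵥ v j = 0 := by
    intro i j
    have hv' : v j = ((lam j : ℂ))⁻¹ • ((Xᴴ * X) *ᵥ v j) := by
      rw [hAv j, smul_smul, inv_mul_cancel₀, one_smul]
      exact_mod_cast Complex.ofReal_ne_zero.mpr (hlam j).ne'
    rw [hv', dotProduct_smul, Matrix.dotProduct_mulVec, ← Matrix.vecMul_vecMul,
      ← Matrix.star_mulVec, hXu i]
    simp
  have hvu : ∀ i j, star (v j) ⬝ᵥ u i = 0 := by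
    intro i j
    have : star (star (u i) ⬝ᵥ v j) = star (v j) ⬝ᵥ u i := by
      rw [Matrix.star_dotProduct, star_star]
    rw [← this, huv i j, star_zero]
  -- combined family
  have hkn : k ≤ n := by omega
  let wf : Fin n → EuclideanSpace ℂ (Fin n) := fun j =>
    if h : (j : ℕ) < k then (WithLp.equiv 2 _).symm (u ⟨(j : ℕ), h⟩)
    else if h2 : (j : ℕ) < 2 * k then (WithLp.equiv 2 _).symm (v ⟨(j : ℕ) - k, by omega⟩)
    else 0
  have hwfu : ∀ (j : Fin n) (h : (j:ℕ) < k),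
      wf j = (WithLp.equiv 2 _).symm (u ⟨(j:ℕ), h⟩) := by
    intro j h; simp only [wf]; rw [dif_pos h]
  have hwfv : ∀ (j : Fin n) (h1 : ¬ (j:ℕ) < k) (h2 : (j:ℕ) < 2*k),
      wf j = (WithLp.equiv 2 _).symm (v ⟨(j:ℕ) - k, by omega⟩) := by
    intro j h1 h2; simp only [wf]; rw [dif_neg h1, dif_pos h2]
  have hwd : ∀ p q : Fin n, (p:ℕ) < 2*k → (q:ℕ) < 2*k →
      (inner ℂ (wf p) (wf q) : ℂ) = if p = q then 1 else 0 := by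
    intro p q hp hq
    by_cases hp1 : (p:ℕ) < k <;> by_cases hq1 : (q:ℕ) < k
    · rw [hwfu p hp1, hwfu q hq1, EuclideanSpace.inner_piLp_equiv_symm, huu]
      simp [Fin.ext_iff]
    · have hpq : p ≠ q := by intro h; rw [Fin.ext_iff] at h; omega
      rw [hwfu p hp1, hwfv q hq1 hq, EuclideanSpace.inner_piLp_equiv_symm, huv, if_neg hpq]
    · have hpq : p ≠ q := by intro h; rw [Fin.ext_iff] at h; omega
      rw [hwfv p hp1 hp, hwfu q hq1, EuclideanSpace.inner_piLp_equiv_symm, hvu, if_neg hpq]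
    · rw [hwfv p hp1 hp, hwfv q hq1 hq, EuclideanSpace.inner_piLp_equiv_symm, hvv]
      simp only [Fin.mk.injEq]
      by_cases h : p = q
      · rw [if_pos (by rw [h]), if_pos h]
      · have hne : ¬((p:ℕ) - k = (q:ℕ) - k) := by
          intro hc; apply h; apply Fin.ext; omega
        rw [if_neg hne, if_neg h]
  have horth : Orthonormal ℂ (Set.restrict {j : Fin n | (j:ℕ) < 2*k} wf) := by
    rw [orthonormal_iff_ite]
    rintro ⟨p, hp⟩ ⟨q, hq⟩
    show inner ℂ (wf p) (wf q) = _
    rw [hwd p q hp hq]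
    by_cases h : p = q
    · rw [if_pos h, if_pos (Subtype.ext h)]
    · rw [if_neg h, if_neg (fun hc => h (Subtype.ext_iff.mp hc))]
  obtain ⟨b, hb⟩ := horth.exists_orthonormalBasis_extension_of_card_eq (by simp)
  have hbu : ∀ i : Fin k, ⇑(b ⟨(i:ℕ), by omega⟩) = u i := by
    intro i
    have hi : ((⟨(i:ℕ), by omega⟩ : Fin n) : ℕ) < k := i.isLt
    have hmem : (⟨(i:ℕ), by omega⟩ : Fin n) ∈ {j : Fin n | (j:ℕ) < 2*k} := by
      simp only [Set.mem_setOf_eq]; omega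
    rw [hb _ hmem, hwfu _ hi]
    exact congrArg u (Fin.ext rfl)
  have hbv : ∀ i : Fin k, ⇑(b ⟨k + (i:ℕ), by omega⟩) = v i := by
    intro i
    have hmem : (⟨k + (i:ℕ), by omega⟩ : Fin n) ∈ {j : Fin n | (j:ℕ) < 2*k} := by
      simp only [Set.mem_setOf_eq]; omega
    have h1 : ¬ ((⟨k + (i:ℕ), by omega⟩ : Fin n) : ℕ) < k := by simp
    have h2 : ((⟨k + (i:ℕ), by omega⟩ : Fin n) : ℕ) < 2 * k := by simp; omega
    rw [hb _ hmem, hwfv _ h1 h2]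
    exact congrArg v (Fin.ext (by simp))
  -- X applied to basis columns
  have hXb0 : ∀ q : Fin n, (q:ℕ) < k → X *ᵥ ⇑(b q) = 0 := by
    intro q hq
    have hmem : q ∈ {j : Fin n | (j:ℕ) < 2*k} := by
      simp only [Set.mem_setOf_eq]; omega
    have : ⇑(b q) = u ⟨(q:ℕ), hq⟩ := by rw [hb _ hmem, hwfu _ hq]; rfl
    rw [this, hXu]
  have hbvq : ∀ q : Fin n, ∀ (h1 : ¬ (q:ℕ) < k) (h2 : (q:ℕ) < 2*k),
      ⇑(b q) = v ⟨(q:ℕ) - k, by omega⟩ := by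
    intro q h1 h2
    have hmem : q ∈ {j : Fin n | (j:ℕ) < 2*k} := by
      simp only [Set.mem_setOf_eq]; omega
    rw [hb _ hmem, hwfv _ h1 h2]
    rfl
  have hXbz : ∀ q : Fin n, ¬((q:ℕ) < 2*k) → X *ᵥ ⇑(b q) = 0 := by
    intro q hq
    have hov : ∀ i : Fin k, star (v i) ⬝ᵥ ⇑(b q) = 0 := by
      intro i
      have h1 : (⟨k + (i:ℕ), by omega⟩ : Fin n) ≠ q := by
        intro h; rw [Fin.ext_iff] at h; simp at h; omega
      have h := orthonormal_iff_ite.mp b.orthonormal ⟨k + (i:ℕ), by omega⟩ q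
      rw [if_neg h1] at h
      rw [← hbv i, dotProduct_comm]
      exact h
    have hA0 : (Xᴴ * X) *ᵥ ⇑(b q) = 0 := by
      have hcoef : ∀ j : Fin n, star ⇑(B j) ⬝ᵥ ((Xᴴ * X) *ᵥ ⇑(b q)) = 0 := by
        intro j
        rw [Matrix.dotProduct_mulVec]
        have hsw : star ⇑(B j) ᵥ* (Xᴴ * X) = star ((Xᴴ * X) *ᵥ ⇑(B j)) := by
          rw [Matrix.star_mulVec, show (Xᴴ*X)ᴴ = Xᴴ*X from hH]
        have hst : star ((Xᴴ * X) *ᵥ ⇑(B j)) = ((μ j : ℂ)) • star ⇑(B j) := by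
          rw [hmv j]
          funext r
          simp only [Pi.star_apply, Pi.smul_apply, Complex.real_smul, star_mul',
            Complex.star_def, Complex.conj_ofReal, smul_eq_mul]
        rw [hsw, hst, smul_dotProduct]
        by_cases hμ : μ j = 0
        · rw [hμ]; simp
        · have hBv : v (e.symm ⟨j, hμ⟩) = ⇑(B j) := by
            show ⇑(B ((e (e.symm ⟨j, hμ⟩)) : Fin n)) = ⇑(B j)
            rw [Equiv.apply_symm_apply]
          rw [← hBv, hov]
          simp
      have hz : ((WithLp.equiv 2 ((i : Fin n) → ℂ)).symm ((Xᴴ * X) *ᵥ ⇑(b q))) = 0 := by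
        have hrep := B.sum_repr' ((WithLp.equiv 2 ((i : Fin n) → ℂ)).symm ((Xᴴ * X) *ᵥ ⇑(b q)))
        rw [← hrep]
        refine Finset.sum_eq_zero fun j _ => ?_
        have : (inner ℂ (B j) ((WithLp.equiv 2 ((i : Fin n) → ℂ)).symm ((Xᴴ * X) *ᵥ ⇑(b q))) : ℂ) = 0 := by
          rw [EuclideanSpace.inner_eq_star_dotProduct, dotProduct_comm]; exact hcoef j
        rw [this, zero_smul]
      simpa using hz
    have hdz : star (X *ᵥ ⇑(b q)) ⬝ᵥ (X *ᵥ ⇑(b q)) = 0 := by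
      rw [Matrix.star_mulVec, ← Matrix.dotProduct_mulVec, Matrix.mulVec_mulVec, hA0,
        dotProduct_zero]
    exact dot_star_self_zero' _ hdz
  have hbu' : ∀ (p : Fin n) (i : Fin k), (p:ℕ) = (i:ℕ) → ⇑(b p) = u i := by
    intro p i hpi
    have h1 : (p:ℕ) < k := by have := i.isLt; omega
    have hmem : p ∈ {j : Fin n | (j:ℕ) < 2*k} := by
      show (p:ℕ) < 2*k; omega
    rw [hb _ hmem, hwfu _ h1]
    exact congrArg u (Fin.ext hpi)
  have hbvq' : ∀ (q : Fin n) (i : Fin k), (q:ℕ) = k + (i:ℕ) → ⇑(b q) = v i := by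
    intro q i hqi
    have h1 : ¬ (q:ℕ) < k := by omega
    have h2 : (q:ℕ) < 2*k := by have := i.isLt; omega
    have hmem : q ∈ {j : Fin n | (j:ℕ) < 2*k} := h2
    rw [hb _ hmem, hwfv _ h1 h2]
    exact congrArg v (Fin.ext (show (q:ℕ) - k = (i:ℕ) from by omega))
  -- the unitary matrix
  set U : Matrix (Fin n) (Fin n) ℂ := Matrix.of (fun r q : Fin n => (b q) r) with hUdef
  have hδ : ∀ p j : Fin n, star ⇑(b p) ⬝ᵥ ⇑(b j) = if p = j then (1:ℂ) else 0 :=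
    fun p j => by rw [dotProduct_comm]; exact orthonormal_iff_ite.mp b.orthonormal p j
  have hUU : Uᴴ * U = 1 := by
    ext p q
    rw [Matrix.one_apply]
    exact hδ p q
  have hMpq : ∀ p q : Fin n, (Uᴴ * X * U) p q = star ⇑(b p) ⬝ᵥ (X *ᵥ ⇑(b q)) := by
    intro p q
    rw [Matrix.mul_assoc]
    rfl
  refine ⟨U, a, hUU, ha, ?_, ?_⟩
  · intro p q
    rw [hMpq p q]
    by_cases hq1 : (q:ℕ) < k
    · rw [hXb0 q hq1, dotProduct_zero]
      symm
      exact Finset.sum_eq_zero fun i _ => if_neg (fun hc => by omega)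
    by_cases hq2 : (q:ℕ) < 2*k
    · obtain ⟨i0, hq0⟩ : ∃ i0 : Fin k, (q:ℕ) = k + (i0:ℕ) :=
        ⟨⟨(q:ℕ)-k, by omega⟩, show (q:ℕ) = k + ((q:ℕ)-k) by omega⟩
      rw [hbvq' q i0 hq0, hXv i0, dotProduct_smul]
      have hp0 : ⇑(b ⟨(i0:ℕ), by omega⟩) = u i0 := hbu' ⟨(i0:ℕ), by omega⟩ i0 rfl
      rw [← hp0, hδ]
      have hsum : (∑ i : Fin k, if (p : ℕ) = (i : ℕ) ∧ (q : ℕ) = k + (i : ℕ)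
            then ((a i : ℝ) : ℂ) else 0)
          = if (p : ℕ) = (i0 : ℕ) ∧ (q : ℕ) = k + (i0 : ℕ) then ((a i0 : ℝ) : ℂ) else 0 :=
        Finset.sum_eq_single i0
          (fun i _ hne => if_neg (fun hc => hne (Fin.ext (by omega))))
          (fun h => absurd (Finset.mem_univ i0) h)
      rw [hsum]
      by_cases hp : p = (⟨(i0:ℕ), by omega⟩ : Fin n)
      · rw [if_pos hp, if_pos ⟨by rw [hp], hq0⟩, smul_eq_mul, mul_one]
      · rw [if_neg hp, if_neg, smul_zero]
        rintro ⟨h1, h2⟩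
        exact hp (Fin.ext (show (p:ℕ) = (i0:ℕ) from h1))
    · rw [hXbz q hq2, dotProduct_zero]
      symm
      exact Finset.sum_eq_zero fun i _ => if_neg (fun hc => by have := i.isLt; omega)
  · -- charpoly
    have hVmem := hH.eigenvectorUnitary.2
    rw [Matrix.mem_unitaryGroup_iff'] at hVmem
    have hV : ((hH.eigenvectorUnitary : Matrix (Fin n) (Fin n) ℂ))ᴴ
        * (hH.eigenvectorUnitary : Matrix (Fin n) (Fin n) ℂ) = 1 := hVmem
    have hcp : (Xᴴ * X).charpoly = (Matrix.diagonal (fun j => ((μ j : ℂ)))).charpoly := by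
      rw [hH.charpoly_eq, charpoly_diag]
      rfl
    rw [hcp, charpoly_diag]
    have hT : (Finset.univ.filter (fun j => μ j ≠ 0)).card = k := by
      rw [← hcard, Fintype.card_subtype]
    rw [← Finset.prod_mul_prod_compl (Finset.univ.filter (fun j => μ j ≠ 0))]
    have h1 : (∏ j ∈ (Finset.univ.filter (fun j => μ j ≠ 0))ᶜ,
        (Polynomial.X - C ((μ j : ℂ)))) = Polynomial.X ^ (n - k) := by
      have hz : ∀ j ∈ (Finset.univ.filter (fun j => μ j ≠ 0))ᶜ,
          (Polynomial.X - C ((μ j : ℂ))) = Polynomial.X := by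
        intro j hj
        rw [Finset.mem_compl, Finset.mem_filter] at hj
        have : μ j = 0 := by
          by_contra hne
          exact hj ⟨Finset.mem_univ j, hne⟩
        rw [this]
        simp
      rw [Finset.prod_congr rfl hz, Finset.prod_const, Finset.card_compl, hT]
      simp
    have h2 : (∏ j ∈ Finset.univ.filter (fun j => μ j ≠ 0), (Polynomial.X - C ((μ j : ℂ))))
        = ∏ i : Fin k, (Polynomial.X - C (((a i)^2 : ℝ) : ℂ)) := by
      rw [Finset.prod_subtype (Finset.univ.filter (fun j => μ j ≠ 0))
        (p := fun j => μ j ≠ 0) (by simp) (fun j => Polynomial.X - C ((μ j : ℂ)))]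
      rw [← Equiv.prod_comp e (fun x : {j // μ j ≠ 0} => Polynomial.X - C ((μ (x : Fin n) : ℂ)))]
      exact Finset.prod_congr rfl fun i _ => by rw [hasq i]
    rw [h1, h2, mul_comm]
end

section
/- Let X be a nonzero n×n complex matrix with X² = 0, and suppose that X*X has exactly two distinct nonzero eigenvalues μ_1 ≠ μ_2, each with multiplicity κ (and eigenvalue 0 with multiplicity n − 2κ). Set c_1 = Tr(XX*), c_2 = Tr([X,X*]·[X,X*]*), and ρ = 2κ(√μ_1 + √μ_2). Then ρ² = 4κ·c_1 + 4κ·√(2c_1² − κ·c_2). (This is the algebraic core of Theorem 4.2, giving the hyperKähler potential on a cohomogeneity-two nilpotent orbit in a classical Lie algebra.) -/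
open Matrix Polynomial

lemma charpoly_conj_aux {m : Type*} [Fintype m] [DecidableEq m] {R : Type*} [CommRing R]
    (U V M : Matrix m m R) (hUV : U * V = 1) :
    (U * M * V).charpoly = M.charpoly := by
  have hmap : U.map C * V.map C = 1 := by
    rw [← Matrix.map_mul, hUV, Matrix.map_one _ (map_zero C) (map_one C)]
  have hcm : charmatrix (U * M * V) = U.map C * charmatrix M * V.map C := by
    unfold charmatrix
    rw [mul_sub, sub_mul]
    congr 1
    · rw [mul_assoc, (Matrix.scalar_commute (X : R[X]) (Commute.all _) _).eq,
        ← mul_assoc, hmap, one_mul]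
    · simp [RingHom.mapMatrix_apply, Matrix.map_mul]
  have hdet : (U.map C).det * (V.map C).det = 1 := by
    rw [← det_mul, hmap, det_one]
  rw [Matrix.charpoly, hcm, det_mul, det_mul, mul_right_comm, hdet, one_mul, Matrix.charpoly]

lemma charpoly_diagonal_aux {m : Type*} [Fintype m] [DecidableEq m] {R : Type*} [CommRing R]
    (d : m → R) : (diagonal d).charpoly = ∏ i, (X - C (d i)) := by
  unfold Matrix.charpoly charmatrix
  have : (scalar m) X - C.mapMatrix (diagonal d) = diagonal (fun i => X - C (d i)) := by
    rw [scalar_apply, RingHom.mapMatrix_apply, diagonal_map (map_zero C), ← diagonal_sub]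
  rw [this, det_diagonal]

lemma hermitian_charpoly_trace_aux (m : ℕ) (A : Matrix (Fin m) (Fin m) ℂ)
    (hA : A.IsHermitian) :
    A.charpoly = ∏ i, (X - C ((hA.eigenvalues i : ℂ))) ∧
    A.trace = ∑ i, ((hA.eigenvalues i : ℂ)) ∧
    (A * A).trace = ∑ i, ((hA.eigenvalues i : ℂ)) ^ 2 := by
  set U : Matrix (Fin m) (Fin m) ℂ := (hA.eigenvectorUnitary : Matrix (Fin m) (Fin m) ℂ)
    with hUdef
  set D : Matrix (Fin m) (Fin m) ℂ := diagonal (RCLike.ofReal ∘ hA.eigenvalues) with hDdef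
  have hU1 : U * star U = 1 := Matrix.mem_unitaryGroup_iff.mp hA.eigenvectorUnitary.2
  have hU2 : star U * U = 1 := Matrix.mem_unitaryGroup_iff'.mp hA.eigenvectorUnitary.2
  have hspec : A = U * D * star U := hA.spectral_theorem
  refine ⟨?_, ?_, ?_⟩
  · rw [congrArg Matrix.charpoly hspec, charpoly_conj_aux U (star U) D hU1, hDdef,
      charpoly_diagonal_aux]
    rfl
  · rw [congrArg Matrix.trace hspec, trace_mul_comm, ← mul_assoc, hU2, one_mul, hDdef,
      trace_diagonal]
    rfl
  · have h2 : A * A = U * (D * D) * star U := by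
      conv_lhs => rw [hspec]
      calc U * D * star U * (U * D * star U) = U * (D * ((star U * U) * (D * star U))) := by
            simp only [mul_assoc]
          _ = U * (D * D) * star U := by rw [hU2, one_mul]; simp only [mul_assoc]
    rw [congrArg Matrix.trace h2, trace_mul_comm, ← mul_assoc, hU2, one_mul, hDdef,
      diagonal_mul_diagonal, trace_diagonal]
    simp [pow_two]

lemma sums_from_charpoly_aux (m κ n' : ℕ) (f : Fin m → ℂ) (μ₁ μ₂ : ℂ)
    (h : ∏ i, (X - C (f i)) = X ^ n' * (X - C μ₁) ^ κ * (X - C μ₂) ^ κ) :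
    (∑ i, f i = κ * μ₁ + κ * μ₂) ∧ (∑ i, f i ^ 2 = κ * μ₁ ^ 2 + κ * μ₂ ^ 2) := by
  have hprod : ∏ i, (X - C (f i)) =
      ((Finset.univ.val.map f).map (fun a => X - C a)).prod := by
    rw [Multiset.map_map]; rfl
  have hroots : (Finset.univ.val.map f) =
      Multiset.replicate n' 0 + Multiset.replicate κ μ₁ + Multiset.replicate κ μ₂ := by
    have := congrArg Polynomial.roots (hprod.symm.trans h)
    rw [Polynomial.roots_multiset_prod_X_sub_C] at this
    rw [this, Polynomial.roots_mul, Polynomial.roots_mul, Polynomial.roots_pow,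
      Polynomial.roots_pow, Polynomial.roots_pow, Polynomial.roots_X,
      Polynomial.roots_X_sub_C, Polynomial.roots_X_sub_C]
    · simp [Multiset.nsmul_singleton]
    · exact ((monic_X_pow _).mul ((monic_X_sub_C μ₁).pow _)).ne_zero
    · exact (((monic_X_pow _).mul ((monic_X_sub_C μ₁).pow _)).mul
        ((monic_X_sub_C μ₂).pow _)).ne_zero
  constructor
  · have : (Finset.univ.val.map f).sum = κ * μ₁ + κ * μ₂ := by
      rw [hroots]; simp [Multiset.sum_replicate, nsmul_eq_mul]
    simpa [Finset.sum] using this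
  · have h2 : (Finset.univ.val.map f).map (fun a => a ^ 2) =
        Multiset.replicate n' 0 + Multiset.replicate κ (μ₁ ^ 2) +
          Multiset.replicate κ (μ₂ ^ 2) := by
      rw [hroots]; simp [Multiset.map_replicate]
    have := congrArg Multiset.sum h2
    rw [Multiset.map_map] at this
    simpa [Finset.sum, Multiset.sum_replicate, nsmul_eq_mul] using this

/-- Algebraic core of Theorem 4.2: if `X ≠ 0`, `X² = 0`, and `X*X` has exactly two
distinct nonzero eigenvalues `μ₁ ≠ μ₂`, each of multiplicity `κ` (and `0` with
multiplicity `n - 2κ`), then with `c₁ = Tr(XX*)`, `c₂ = Tr([X,X*]·[X,X*]*)` and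
`ρ = 2κ(√μ₁ + √μ₂)` one has `ρ² = 4κc₁ + 4κ√(2c₁² - κc₂)`. -/
theorem potential_cohomogeneity_two (n κ : ℕ)
    (X : Matrix (Fin n) (Fin n) ℂ) (hX : X ≠ 0) (hX2 : X * X = 0)
    (μ₁ μ₂ : ℝ) (hμ : μ₁ ≠ μ₂) (hμ₁ : 0 < μ₁) (hμ₂ : 0 < μ₂)
    (hchar : (Xᴴ * X).charpoly =
      Polynomial.X ^ (n - 2 * κ) * (Polynomial.X - C (μ₁ : ℂ)) ^ κ *
        (Polynomial.X - C (μ₂ : ℂ)) ^ κ)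
    (c₁ c₂ : ℝ)
    (hc₁ : (c₁ : ℂ) = (X * Xᴴ).trace)
    (hc₂ : (c₂ : ℂ) = ((X * Xᴴ - Xᴴ * X) * (X * Xᴴ - Xᴴ * X)ᴴ).trace) :
    (2 * κ * (Real.sqrt μ₁ + Real.sqrt μ₂)) ^ 2 =
      4 * κ * c₁ + 4 * κ * Real.sqrt (2 * c₁ ^ 2 - κ * c₂) := by
  have hA : (Xᴴ * X).IsHermitian := isHermitian_conjTranspose_mul_self X
  obtain ⟨hcp, htr, htr2⟩ := hermitian_charpoly_trace_aux n (Xᴴ * X) hA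
  obtain ⟨hs1, hs2⟩ := sums_from_charpoly_aux n κ (n - 2 * κ)
    (fun i => (hA.eigenvalues i : ℂ)) (μ₁ : ℂ) (μ₂ : ℂ) (hcp.symm.trans hchar)
  -- trace identities
  have htrA : (Xᴴ * X).trace = (κ : ℂ) * μ₁ + κ * μ₂ := htr.trans hs1
  have htrA2 : ((Xᴴ * X) * (Xᴴ * X)).trace = (κ : ℂ) * μ₁ ^ 2 + κ * μ₂ ^ 2 :=
    htr2.trans hs2
  -- c₁
  have hc₁' : (c₁ : ℂ) = (κ : ℂ) * μ₁ + κ * μ₂ := by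
    rw [hc₁, trace_mul_comm, htrA]
  -- c₂
  have hcross1 : (X * Xᴴ * (Xᴴ * X)).trace = 0 := by
    rw [trace_mul_comm]
    have : Xᴴ * X * (X * Xᴴ) = Xᴴ * (X * X) * Xᴴ := by simp only [mul_assoc]
    rw [this, hX2, mul_zero, zero_mul, trace_zero]
  have hcross2 : (Xᴴ * X * (X * Xᴴ)).trace = 0 := by
    have : Xᴴ * X * (X * Xᴴ) = Xᴴ * (X * X) * Xᴴ := by simp only [mul_assoc]
    rw [this, hX2, mul_zero, zero_mul, trace_zero]
  have hBB : (X * Xᴴ * (X * Xᴴ)).trace = ((Xᴴ * X) * (Xᴴ * X)).trace := by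
    rw [show X * Xᴴ * (X * Xᴴ) = X * (Xᴴ * X * Xᴴ) by simp only [mul_assoc],
      trace_mul_comm]
    congr 1
    simp only [mul_assoc]
  have hc₂' : (c₂ : ℂ) = 2 * ((κ : ℂ) * μ₁ ^ 2 + κ * μ₂ ^ 2) := by
    have hherm : (X * Xᴴ - Xᴴ * X)ᴴ = X * Xᴴ - Xᴴ * X := by
      simp [conjTranspose_sub, conjTranspose_mul]
    rw [hc₂, hherm, sub_mul, mul_sub, mul_sub, trace_sub, trace_sub, trace_sub,
      hcross1, hcross2, hBB, htrA2]
    ring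
  -- pass to ℝ
  have hc1R : c₁ = κ * (μ₁ + μ₂) := by
    have : ((c₁ : ℝ) : ℂ) = (((κ : ℝ) * (μ₁ + μ₂) : ℝ) : ℂ) := by
      rw [hc₁']; push_cast; ring
    exact_mod_cast this
  have hc2R : c₂ = 2 * κ * (μ₁ ^ 2 + μ₂ ^ 2) := by
    have : ((c₂ : ℝ) : ℂ) = (((2 * (κ : ℝ) * (μ₁ ^ 2 + μ₂ ^ 2)) : ℝ) : ℂ) := by
      rw [hc₂']; push_cast; ring
    exact_mod_cast this
  -- real arithmetic
  have h1 : Real.sqrt μ₁ ^ 2 = μ₁ := Real.sq_sqrt hμ₁.le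
  have h2 : Real.sqrt μ₂ ^ 2 = μ₂ := Real.sq_sqrt hμ₂.le
  have hkey : 2 * c₁ ^ 2 - κ * c₂ = (2 * κ * (Real.sqrt μ₁ * Real.sqrt μ₂)) ^ 2 := by
    have hs : (Real.sqrt μ₁ * Real.sqrt μ₂) ^ 2 = μ₁ * μ₂ := by
      rw [mul_pow, h1, h2]
    rw [hc1R, hc2R]
    linear_combination (-(4 : ℝ) * (κ : ℝ) ^ 2) * hs
  have hsqrt : Real.sqrt (2 * c₁ ^ 2 - κ * c₂) = 2 * κ * (Real.sqrt μ₁ * Real.sqrt μ₂) := by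
    rw [hkey, Real.sqrt_sq (by positivity)]
  rw [hsqrt, hc1R]
  linear_combination (4 * (κ : ℝ) ^ 2) * h1 + (4 * (κ : ℝ) ^ 2) * h2
end

section
/- Let X be an n×n complex skew-symmetric matrix (Xᵀ = −X) with rank X = 2, and let x ∈ ℂ^n satisfy X² = x·xᵀ. Set c_1 = Tr(XX*) and c_2 = Tr([X,X*]·[X,X*]*). Then c_2 = c_1² − 2‖x‖⁴; equivalently, ‖x‖² = √((c_1² − c_2)/2). -/
open Matrix BigOperators

lemma det_submatrix_zero {n : ℕ} (X : Matrix (Fin n) (Fin n) ℂ) (h : X.rank = 2)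
    (f g : Fin 3 → Fin n) : (X.submatrix f g).det = 0 := by
  by_contra hd
  have hu : IsUnit (X.submatrix f g) :=
    (Matrix.isUnit_iff_isUnit_det _).mpr (isUnit_iff_ne_zero.mpr hd)
  have h3 : (X.submatrix f g).rank = 3 := by
    simpa using Matrix.rank_of_isUnit _ hu
  have key : X.submatrix f g =
      ((1 : Matrix (Fin n) (Fin n) ℂ).submatrix f (Equiv.refl (Fin n))) * X *
        ((1 : Matrix (Fin n) (Fin n) ℂ).submatrix (Equiv.refl (Fin n)) g) := by
    rw [Matrix.one_submatrix_mul, Matrix.mul_submatrix_one]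
    simp
  have hle : (X.submatrix f g).rank ≤ X.rank := by
    rw [key]
    exact le_trans (Matrix.rank_mul_le_left _ _) (Matrix.rank_mul_le_right _ _)
  omega

lemma plucker {n : ℕ} (X : Matrix (Fin n) (Fin n) ℂ) (hrank : X.rank = 2)
    (hpt : ∀ i j, X j i = -X i j) :
    ∀ i j k l, X i j * X k l - X i k * X j l + X i l * X j k = 0 := by
  have hdiag : ∀ i, X i i = 0 := fun i => by linear_combination hpt i i / 2
  have key : ∀ a b c d, X b c * (X a b * X c d - X a c * X b d + X a d * X b c) = 0 := by
    intro a b c d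
    have h := det_submatrix_zero X hrank ![a, b, c] ![d, b, c]
    rw [Matrix.det_fin_three] at h
    simp only [Matrix.submatrix_apply, Matrix.cons_val_zero, Matrix.cons_val_one,
      Matrix.head_cons, Matrix.cons_val_two, Matrix.tail_cons] at h
    rw [hdiag b, hdiag c, hpt b c] at h
    linear_combination h
  intro i j k l
  have u1 : X i j * (X i j * X k l - X i k * X j l + X i l * X j k) = 0 := by
    have h := key k i j l
    rw [hpt i k, hpt j k] at h
    linear_combination h
  have u2 : X j l * (X i j * X k l - X i k * X j l + X i l * X j k) = 0 := by
    have h := key i j l k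
    rw [hpt k l] at h
    linear_combination -h
  have u3 := key i j k l
  have hsq : (X i j * X k l - X i k * X j l + X i l * X j k) *
      (X i j * X k l - X i k * X j l + X i l * X j k) = 0 := by
    linear_combination X k l * u1 - X i k * u2 + X i l * u3
  exact mul_self_eq_zero.mp hsq

lemma sum_swap13 {ι M : Type*} [Fintype ι] [AddCommMonoid M] (f : ι → ι → ι → M) :
    ∑ a, ∑ b, ∑ c, f a b c = ∑ a, ∑ b, ∑ c, f c b a := by
  calc ∑ a, ∑ b, ∑ c, f a b c
      = ∑ a, ∑ b, ∑ c, f b a c :=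
        Finset.sum_comm (f := fun x y => ∑ c, f x y c)
    _ = ∑ a, ∑ b, ∑ c, f c a b :=
        Finset.sum_congr rfl fun a _ => Finset.sum_comm (f := fun x y => f x a y)
    _ = ∑ a, ∑ b, ∑ c, f c b a :=
        Finset.sum_comm (f := fun x y => ∑ c, f c x y)

lemma two_trace_sq {n : ℕ} (X : Matrix (Fin n) (Fin n) ℂ)
    (hpt : ∀ i j, X j i = -X i j)
    (hP : ∀ i j k l, X i j * X k l - X i k * X j l + X i l * X j k = 0) :
    2 * ((X * Xᴴ) * (X * Xᴴ)).trace = ((X * Xᴴ).trace) ^ 2 := by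
  have hptc : ∀ i j, star (X j i) = -star (X i j) := fun i j => by rw [hpt i j, star_neg]
  have hPc : ∀ i j k l,
      star (X i j) * star (X k l) - star (X i k) * star (X j l)
        + star (X i l) * star (X j k) = 0 := by
    intro i j k l
    have h := congrArg star (hP i j k l)
    simpa [star_sub, star_add, star_mul'] using h
  have hE : ∀ i k j l : Fin n,
      X i j * star (X k j) * (X k l * star (X i l))
        + X i j * star (X l j) * (X l k * star (X i k))
      = X i j * star (X i j) * (X k l * star (X k l)) := by
    intro i k j l
    rw [hpt k l, hptc j l, hptc k i, hptc j i]
    linear_combination (X i j * X k l) * hPc k j i l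
  have e1 : ((X * Xᴴ) * (X * Xᴴ)).trace
      = ∑ i, ∑ k, ∑ j, ∑ l, X i j * star (X k j) * (X k l * star (X i l)) := by
    simp only [Matrix.trace, Matrix.diag, Matrix.mul_apply, Matrix.conjTranspose_apply]
    exact Finset.sum_congr rfl fun i _ =>
      Finset.sum_congr rfl fun k _ => Finset.sum_mul_sum _ _ _ _
  have e2 : (X * Xᴴ).trace = ∑ i, ∑ j, X i j * star (X i j) := by
    simp only [Matrix.trace, Matrix.diag, Matrix.mul_apply, Matrix.conjTranspose_apply]
  have e3 : ((X * Xᴴ).trace) ^ 2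
      = ∑ i, ∑ k, ∑ j, ∑ l, X i j * star (X i j) * (X k l * star (X k l)) := by
    rw [e2, sq, Finset.sum_mul_sum]
    exact Finset.sum_congr rfl fun i _ =>
      Finset.sum_congr rfl fun k _ => Finset.sum_mul_sum _ _ _ _
  have e4 : ∑ i, ∑ k, ∑ j, ∑ l, X i j * star (X k j) * (X k l * star (X i l))
      = ∑ i, ∑ k, ∑ j, ∑ l, X i j * star (X l j) * (X l k * star (X i k)) :=
    Finset.sum_congr rfl fun i _ =>
      sum_swap13 (fun k j l => X i j * star (X k j) * (X k l * star (X i l)))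
  rw [e1, e3, two_mul]
  nth_rewrite 1 [e4]
  rw [← Finset.sum_add_distrib]
  refine Finset.sum_congr rfl fun i _ => ?_
  rw [← Finset.sum_add_distrib]
  refine Finset.sum_congr rfl fun k _ => ?_
  rw [← Finset.sum_add_distrib]
  refine Finset.sum_congr rfl fun j _ => ?_
  rw [← Finset.sum_add_distrib]
  exact Finset.sum_congr rfl fun l _ => by linear_combination hE i k j l

/-- Section 5.1: for `X ∈ so(n,ℂ)` of rank `2` with `X² = x·xᵀ`, the invariants
`c₁ = Tr(XX*)`, `c₂ = Tr([X,X*]·[X,X*]*)` satisfy `c₂ = c₁² - 2‖x‖⁴`, equivalently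
`‖x‖² = √((c₁² - c₂)/2)`. -/
theorem invariants_rank_two_skew (n : ℕ)
    (X : Matrix (Fin n) (Fin n) ℂ) (hskew : Xᵀ = -X) (hrank : X.rank = 2)
    (x : Fin n → ℂ) (hX2 : X * X = Matrix.vecMulVec x x)
    (c₁ c₂ : ℝ)
    (hc₁ : (c₁ : ℂ) = (X * Xᴴ).trace)
    (hc₂ : (c₂ : ℂ) = ((X * Xᴴ - Xᴴ * X) * (X * Xᴴ - Xᴴ * X)ᴴ).trace) :
    c₂ = c₁ ^ 2 - 2 * (∑ i, Complex.normSq (x i)) ^ 2 ∧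
    ∑ i, Complex.normSq (x i) = Real.sqrt ((c₁ ^ 2 - c₂) / 2) := by
  have hpt : ∀ i j, X j i = -X i j := fun i j => by
    have := congrFun (congrFun hskew i) j
    simpa using this
  set s : ℝ := ∑ i, Complex.normSq (x i) with hs
  have hA : (X * Xᴴ)ᴴ = X * Xᴴ := by
    rw [Matrix.conjTranspose_mul, Matrix.conjTranspose_conjTranspose]
  have hB : (Xᴴ * X)ᴴ = Xᴴ * X := by
    rw [Matrix.conjTranspose_mul, Matrix.conjTranspose_conjTranspose]
  have c2exp : (c₂ : ℂ) = ((X * Xᴴ) * (X * Xᴴ)).trace + ((Xᴴ * X) * (Xᴴ * X)).trace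
      - ((X * Xᴴ) * (Xᴴ * X)).trace - ((Xᴴ * X) * (X * Xᴴ)).trace := by
    rw [hc₂, Matrix.conjTranspose_sub, hA, hB, Matrix.sub_mul, Matrix.mul_sub, Matrix.mul_sub,
      Matrix.trace_sub, Matrix.trace_sub, Matrix.trace_sub]
    ring
  have eBB : ((Xᴴ * X) * (Xᴴ * X)).trace = ((X * Xᴴ) * (X * Xᴴ)).trace := by
    rw [show (Xᴴ * X) * (Xᴴ * X) = Xᴴ * (X * Xᴴ * X) by noncomm_ring,
      Matrix.trace_mul_comm]
    congr 1
    noncomm_ring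
  have eBA : ((Xᴴ * X) * (X * Xᴴ)).trace = ((X * Xᴴ) * (Xᴴ * X)).trace :=
    Matrix.trace_mul_comm _ _
  have hz : ∀ z : ℂ, z * star z = (Complex.normSq z : ℂ) := fun z => by
    simpa [Complex.star_def] using Complex.mul_conj z
  have eAB : ((X * Xᴴ) * (Xᴴ * X)).trace = ((s : ℂ)) ^ 2 := by
    have h1 : (X * Xᴴ) * (Xᴴ * X) = (X * Xᴴ * Xᴴ) * X := by noncomm_ring
    rw [h1, Matrix.trace_mul_comm]
    have h2 : X * (X * Xᴴ * Xᴴ) = (X * X) * ((X * X)ᴴ) := by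
      rw [Matrix.conjTranspose_mul]
      noncomm_ring
    rw [h2, hX2]
    simp only [Matrix.trace, Matrix.diag, Matrix.mul_apply, Matrix.conjTranspose_apply,
      Matrix.vecMulVec_apply]
    calc ∑ i, ∑ j, x i * x j * star (x i * x j)
        = ∑ i, ∑ j, ((Complex.normSq (x i) : ℂ) * (Complex.normSq (x j) : ℂ)) := by
          refine Finset.sum_congr rfl fun i _ => Finset.sum_congr rfl fun j _ => ?_
          calc x i * x j * star (x i * x j)
              = (x i * star (x i)) * (x j * star (x j)) := by rw [star_mul']; ring
            _ = _ := by rw [hz, hz]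
      _ = (∑ i, (Complex.normSq (x i) : ℂ)) * (∑ j, (Complex.normSq (x j) : ℂ)) :=
          (Finset.sum_mul_sum _ _ _ _).symm
      _ = ((s : ℂ)) ^ 2 := by rw [hs]; push_cast; ring
  have key2 := two_trace_sq X hpt (plucker X hrank hpt)
  have hc1sq : ((c₁ : ℂ)) ^ 2 = 2 * ((X * Xᴴ) * (X * Xᴴ)).trace := by rw [hc₁, key2]
  have main : (c₂ : ℂ) = (c₁ : ℂ) ^ 2 - 2 * ((s : ℂ)) ^ 2 := by
    rw [c2exp, eBB, eBA, eAB, hc1sq]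
    ring
  have mainR : c₂ = c₁ ^ 2 - 2 * s ^ 2 := by exact_mod_cast main
  refine ⟨mainR, ?_⟩
  have hsnn : 0 ≤ s := Finset.sum_nonneg fun i _ => Complex.normSq_nonneg _
  rw [mainR, show (c₁ ^ 2 - (c₁ ^ 2 - 2 * s ^ 2)) / 2 = s ^ 2 by ring, Real.sqrt_sq hsnn]
end

section
/- Let α_1 be an m×p complex matrix, β_1 a p×m complex matrix, α_2 an n×m complex matrix and β_2 an m×n complex matrix satisfying the moment-map equations α_1 β_1 = β_2 α_2 and α_1 α_1* + β_2 β_2* = β_1* β_1 + α_2* α_2. Define the (n+p)×m block matrix α = [α_2; β_1] (with α_2 on top of β_1) and the m×(n+p) block matrix β = [β_2, −α_1]. Then βα = 0 and ββ* = α*α. (This is the transformation of solutions of the length-three moment-map equations into solutions of the length-two ones, from Lemma 5.1.) -/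
open Matrix

/-- Lemma 5.1 (moment-map transformation): if `α₁β₁ = β₂α₂` and
`α₁α₁* + β₂β₂* = β₁*β₁ + α₂*α₂`, then the block matrices `α = [α₂; β₁]` and
`β = [β₂, -α₁]` satisfy the length-two moment-map equations `βα = 0` and `ββ* = α*α`. -/
theorem length_three_to_length_two (m n p : ℕ)
    (α₁ : Matrix (Fin m) (Fin p) ℂ) (β₁ : Matrix (Fin p) (Fin m) ℂ)
    (α₂ : Matrix (Fin n) (Fin m) ℂ) (β₂ : Matrix (Fin m) (Fin n) ℂ)
    (h1 : α₁ * β₁ = β₂ * α₂)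
    (h2 : α₁ * α₁ᴴ + β₂ * β₂ᴴ = β₁ᴴ * β₁ + α₂ᴴ * α₂) :
    (Matrix.fromCols β₂ (-α₁)) * (Matrix.fromRows α₂ β₁) = 0 ∧
    (Matrix.fromCols β₂ (-α₁)) * (Matrix.fromCols β₂ (-α₁))ᴴ =
      (Matrix.fromRows α₂ β₁)ᴴ * (Matrix.fromRows α₂ β₁) := by
  constructor
  · rw [fromCols_mul_fromRows]
    simp [h1.symm]
  · rw [conjTranspose_fromCols_eq_fromRows_conjTranspose,
      conjTranspose_fromRows_eq_fromCols_conjTranspose,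
      fromCols_mul_fromRows, fromCols_mul_fromRows]
    simp only [conjTranspose_neg, Matrix.neg_mul, Matrix.mul_neg, neg_neg]
    rw [add_comm (β₂ * β₂ᴴ), add_comm (α₂ᴴ * α₂)]
    exact h2
end

section
/- Let X be an n×n complex skew-symmetric matrix (Xᵀ = −X) with X³ = 0, and let x ∈ ℂ^n be a nonzero vector with X² = x·xᵀ. Define the (n+1)×(n+1) block matrix X' = [[X, x],[−xᵀ, 0]]. Then X' is skew-symmetric (X'ᵀ = −X') and X'² = 0. (This exhibits the two-to-one lift of the orbit of Jordan type (3, 2^{2k}, 1^ℓ) in so(n,ℂ) to an orbit of square-zero elements in so(n+1,ℂ), as in Lemma 5.1.) -/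
open Matrix

/-- Lemma 5.1 (the lift): if `Xᵀ = -X`, `X³ = 0` and `X² = x·xᵀ` with `x ≠ 0`, then
the block matrix `X' = [[X, x],[-xᵀ, 0]]` is skew-symmetric and satisfies `X'² = 0`. -/
theorem lift_square_zero (n : ℕ)
    (X : Matrix (Fin n) (Fin n) ℂ) (hskew : Xᵀ = -X)
    (hX3 : X * X * X = 0)
    (x : Fin n → ℂ) (hx : x ≠ 0) (hX2 : X * X = Matrix.vecMulVec x x) :
    (Matrix.fromBlocks X (Matrix.replicateCol (Fin 1) x) (-(Matrix.replicateRow (Fin 1) x)) 0)ᵀ =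
      -(Matrix.fromBlocks X (Matrix.replicateCol (Fin 1) x) (-(Matrix.replicateRow (Fin 1) x)) 0) ∧
    (Matrix.fromBlocks X (Matrix.replicateCol (Fin 1) x) (-(Matrix.replicateRow (Fin 1) x)) 0) *
      (Matrix.fromBlocks X (Matrix.replicateCol (Fin 1) x) (-(Matrix.replicateRow (Fin 1) x)) 0) = 0 := by
  obtain ⟨j, hj⟩ : ∃ j, x j ≠ 0 := Function.ne_iff.mp hx
  have hXx : X *ᵥ x = 0 := by
    have h : X * (X * X) = 0 := by rw [← mul_assoc]; exact hX3
    rw [hX2] at h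
    funext i
    have key : (∑ k, X i k * x k) * x j = 0 := by
      have := congrFun (congrFun h i) j
      simpa [Matrix.mul_apply, Matrix.vecMulVec_apply, Finset.sum_mul, mul_assoc]
        using this
    simpa [Matrix.mulVec, dotProduct] using (mul_eq_zero.mp key).resolve_right hj
  have hxX : x ᵥ* X = 0 := by
    rw [← Matrix.mulVec_transpose, hskew, Matrix.neg_mulVec, hXx, neg_zero]
  have hxx : x ⬝ᵥ x = 0 := by
    have h : (X * X) *ᵥ x = 0 := by
      rw [← Matrix.mulVec_mulVec, hXx, Matrix.mulVec_zero]
    rw [hX2] at h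
    have key : x j * ∑ k, x k * x k = 0 := by
      have := congrFun h j
      simpa [Matrix.mulVec, dotProduct, Matrix.vecMulVec_apply,
        Finset.mul_sum, mul_assoc] using this
    simpa [dotProduct] using (mul_eq_zero.mp key).resolve_left hj
  constructor
  · ext i k
    rcases i with i | i <;> rcases k with k | k <;>
      simp [Matrix.fromBlocks, Matrix.transpose_apply, Matrix.replicateCol_apply, Matrix.replicateRow_apply]
    simpa using congrFun (congrFun hskew i) k
  · rw [Matrix.fromBlocks_multiply]
    have h1 : X * X + Matrix.replicateCol (Fin 1) x * -(Matrix.replicateRow (Fin 1) x) = 0 := by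
      ext i k
      simp [hX2, Matrix.mul_apply, Matrix.vecMulVec_apply, Matrix.replicateCol_apply,
        Matrix.replicateRow_apply, Fin.sum_univ_one]
    have h2 : X * Matrix.replicateCol (Fin 1) x + Matrix.replicateCol (Fin 1) x * (0 : Matrix (Fin 1) (Fin 1) ℂ) = 0 := by
      ext i k
      simpa [Matrix.mul_apply, Matrix.replicateCol_apply, Matrix.mulVec, dotProduct]
        using congrFun hXx i
    have h3 : -(Matrix.replicateRow (Fin 1) x) * X + (0 : Matrix (Fin 1) (Fin 1) ℂ) * -(Matrix.replicateRow (Fin 1) x) = 0 := by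
      ext i k
      simpa [Matrix.mul_apply, Matrix.replicateRow_apply, Matrix.vecMul, dotProduct]
        using congrFun hxX k
    have h4 : -(Matrix.replicateRow (Fin 1) x) * Matrix.replicateCol (Fin 1) x + (0 : Matrix (Fin 1) (Fin 1) ℂ) * 0 = 0 := by
      ext i k
      simpa [Matrix.mul_apply, Matrix.replicateRow_apply, Matrix.replicateCol_apply, dotProduct]
        using hxx
    rw [h1, h2, h3, h4, Matrix.fromBlocks_zero]
end
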